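/- Let G be a C^∞ Lie group modelled on I : ModelWithCorners ℝ E H and let S : G → Submodule ℝ E be a multiplicative distribution on G. Then S is right invariant: for every g : G, S g = Submodule.map (mfderiv I I (fun x => x * g) 1) (S 1), i.e. S(g) is the image of S(1) under the tangent map at the identity of the right translation by g. -/

import Mathlib

open Manifold

/-! Setting `w = 0` in the multiplicativity condition shows that the tangent map of the right
translation by `b` sends `S a` into `S (a * b)`. Applied with `b = g⁻¹` and with `b = g`, and since
these two translations are inverse to each other, this gives both inclusions. -/

section Prod

variable {𝕜 : Type*} [NontriviallyNormedField 𝕜]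
  {E : Type*} [NormedAddCommGroup E] [NormedSpace 𝕜 E] {H : Type*} [TopologicalSpace H]
  {I : ModelWithCorners 𝕜 E H} {M : Type*} [TopologicalSpace M] [ChartedSpace H M]
  {E' : Type*} [NormedAddCommGroup E'] [NormedSpace 𝕜 E'] {H' : Type*} [TopologicalSpace H']
  {I' : ModelWithCorners 𝕜 E' H'} {M' : Type*} [TopologicalSpace M'] [ChartedSpace H' M']
  {E'' : Type*} [NormedAddCommGroup E''] [NormedSpace 𝕜 E''] {H'' : Type*} [TopologicalSpace H'']
  {I'' : ModelWithCorners 𝕜 E'' H''} {M'' : Type*} [TopologicalSpace M''] [ChartedSpace H'' M'']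

theorem mfderiv_apply_inl {f : M × M' → M''} {x : M} {y : M'}
    (hf : MDifferentiableAt (I.prod I') I'' f (x, y)) (v : E) :
    mfderiv (I.prod I') I'' f (x, y) ((v, 0) : TangentSpace (I.prod I') (x, y)) =
      mfderiv I I'' (fun z => f (z, y)) x v := by
  have hinl : MDifferentiableAt I (I.prod I') (fun z : M => (z, y)) x :=
    mdifferentiableAt_id.prodMk mdifferentiableAt_const
  rw [show (fun z => f (z, y)) = f ∘ (·, y) from rfl, mfderiv_comp x hf hinl, mfderiv_prod_left]
  rfl

end Prod

section LieGroup

variable {E : Type*} [NormedAddCommGroup E] [NormedSpace ℝ E] {H : Type*} [TopologicalSpace H]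
  (I : ModelWithCorners ℝ E H) {G : Type*} [TopologicalSpace G] [ChartedSpace H G]

theorem mfderiv_mul_apply_inl [Monoid G] [ContMDiffMul I 1 G] (a b : G) (v : E) :
    mfderiv (I.prod I) I (fun p : G × G => p.1 * p.2) (a, b)
        ((v, 0) : TangentSpace (I.prod I) (a, b)) =
      mfderiv I I (· * b) a v :=
  mfderiv_apply_inl ((contMDiff_mul I 1).mdifferentiable one_ne_zero _) v

theorem mfderiv_mul_right_apply_mfderiv_mul_right_inv [Group G] [ContMDiffMul I 1 G]
    (g : G) (v : E) :
    mfderiv I I (· * g) 1 (mfderiv I I (· * g⁻¹) g v) = v := by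
  have hcomp := mfderiv_comp (I := I) (I' := I) (I'' := I) g
    (mdifferentiableAt_mul_right (a := g)) (mdifferentiableAt_mul_right (a := g⁻¹))
  have hid : (fun x : G => x * g) ∘ (· * g⁻¹) = id := funext fun x => inv_mul_cancel_right x g
  rw [hid, mfderiv_id, mul_inv_cancel] at hcomp
  exact (congrArg (· v) hcomp).symm

def IsMultiplicativeDistribution [Mul G] (S : G → Submodule ℝ E) : Prop :=
  ∀ (g h : G) (v w : E), v ∈ S g → w ∈ S h →
    mfderiv (I.prod I) I (fun p : G × G => p.1 * p.2) (g, h)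
      ((v, w) : TangentSpace (I.prod I) (g, h)) ∈ S (g * h)

variable {I}

theorem IsMultiplicativeDistribution.mfderiv_mul_right_mem [Monoid G] [ContMDiffMul I 1 G]
    {S : G → Submodule ℝ E} (hS : IsMultiplicativeDistribution I S) {a : G} {v : E}
    (hv : v ∈ S a) {b c : G} (hc : a * b = c) :
    mfderiv I I (· * b) a v ∈ S c := by
  subst hc
  have h := hS a b v 0 hv (S b).zero_mem
  rwa [mfderiv_mul_apply_inl] at h

theorem IsMultiplicativeDistribution.eq_map_mfderiv_mul_right [Group G] [ContMDiffMul I 1 G]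
    {S : G → Submodule ℝ E} (hS : IsMultiplicativeDistribution I S) (g : G) :
    S g = Submodule.map (mfderiv I I (· * g) 1).toLinearMap (S 1) := by
  apply le_antisymm
  · exact fun v hv => ⟨_, hS.mfderiv_mul_right_mem hv (mul_inv_cancel g),
      mfderiv_mul_right_apply_mfderiv_mul_right_inv I g v⟩
  · rintro _ ⟨w, hw, rfl⟩
    exact hS.mfderiv_mul_right_mem hw (one_mul g)

end LieGroup

/-- A multiplicative distribution on a Lie group is right invariant: `S g` is the image
of `S 1` under the tangent map at the identity of the right translation by `g`. -/
theorem stmt_6 {E : Type*} [NormedAddCommGroup E] [NormedSpace ℝ E]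
    {H : Type*} [TopologicalSpace H] (I : ModelWithCorners ℝ E H)
    {G : Type*} [TopologicalSpace G] [ChartedSpace H G] [Group G] [LieGroup I (⊤ : ℕ∞) G]
    (S : G → Submodule ℝ E)
    (hS : ∀ (g h : G) (v w : E), v ∈ S g → w ∈ S h →
      mfderiv (I.prod I) I (fun p : G × G => p.1 * p.2) (g, h)
        ((v, w) : TangentSpace (I.prod I) (g, h)) ∈ S (g * h)) :
    ∀ g : G, S g = Submodule.map (mfderiv I I (fun x : G => x * g) 1).toLinearMap (S 1) :=
  IsMultiplicativeDistribution.eq_map_mfderiv_mul_right hS
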